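/- Let w ∈ W, u ∈ W^J, v ∈ W_J, and s ∈ J with vs > v and ws < w (in Bruhat order / length). Then h^J_{uv,w}(q) = 0, i.e., C_v does not appear in the KL-basis expansion of (T_{u^{-1}} C_w)|_J. -/

import Mathlib

open LaurentPolynomial

noncomputable section
attribute [local instance] Classical.propDecidable

namespace HeckeRes

variable {B : Type} {W : Type} [Group W] {M : CoxeterMatrix B}

/-- The Laurent polynomial ring ℤ[q^{±1}]. -/
abbrev R : Type := LaurentPolynomial ℤ

/-- The variable q. -/
abbrev q : R := LaurentPolynomial.T 1

/-- The inverse variable q⁻¹. -/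
abbrev qinv : R := LaurentPolynomial.T (-1)

/-- Bruhat order: u ≤ w iff some reduced word for w has a subword with product u. -/
def bruhatLE (cs : CoxeterSystem M W) (u w : W) : Prop :=
  ∃ l : List B, cs.IsReduced l ∧ cs.wordProd l = w ∧
    ∃ l' : List B, l'.Sublist l ∧ cs.wordProd l' = u

def bruhatLT (cs : CoxeterSystem M W) (u w : W) : Prop :=
  bruhatLE cs u w ∧ u ≠ w

/-- The standard parabolic subgroup W_J. -/
def WJ (cs : CoxeterSystem M W) (J : Set B) : Subgroup W :=
  Subgroup.closure (cs.simple '' J)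

/-- Minimal length representatives of left cosets W/W_J: no right descents in J. -/
def IsMinRep (cs : CoxeterSystem M W) (J : Set B) (u : W) : Prop :=
  ∀ i ∈ J, cs.length (u * cs.simple i) = cs.length u + 1

/-- Minimal length representatives of right cosets W_J\W: no left descents in J. -/
def IsMinRepR (cs : CoxeterSystem M W) (J : Set B) (u : W) : Prop :=
  ∀ i ∈ J, cs.length (cs.simple i * u) = cs.length u + 1

variable {H : Type} [Ring H] [Algebra R H]

/-- Axioms making a basis of H indexed by W into the standard basis of the Hecke
algebra of (W,S), with quadratic relation T_s² = 1 + (q⁻¹ - q) T_s. -/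
structure IsHeckeBasis (cs : CoxeterSystem M W) (Tb : Module.Basis W R H) : Prop where
  T_one : Tb 1 = 1
  T_mul : ∀ u v : W, cs.length (u * v) = cs.length u + cs.length v →
    Tb u * Tb v = Tb (u * v)
  simple_mul : ∀ (i : B) (w : W), cs.length (cs.simple i * w) < cs.length w →
    Tb (cs.simple i) * Tb w = Tb (cs.simple i * w) + (qinv - q) • Tb w
  mul_simple : ∀ (w : W) (i : B), cs.length (w * cs.simple i) < cs.length w →
    Tb w * Tb (cs.simple i) = Tb (w * cs.simple i) + (qinv - q) • Tb w

/-- The restriction map |_J : H → H, T_w ↦ T_w if w ∈ W_J and 0 otherwise. -/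
def resMap (cs : CoxeterSystem M W) (Tb : Module.Basis W R H) (J : Set B) : H →ₗ[R] H :=
  Tb.constr R (fun w => if w ∈ WJ cs J then Tb w else 0)

/-- The parabolic subalgebra H_J, as the span of {T_w : w ∈ W_J}. -/
def HJ (cs : CoxeterSystem M W) (Tb : Module.Basis W R H) (J : Set B) : Submodule R H :=
  Submodule.span R (Tb '' (WJ cs J : Set W))

/-- A Laurent polynomial lies in ℤ[q]. -/
def IsPoly (p : R) : Prop := ∃ f : Polynomial ℤ, p = f.toLaurent

/-- Axioms for the Kazhdan–Lusztig basis: C_w = Σ_{x ≤ w} h_{x,w}(q) T_x with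
h_{w,w} = 1 and h_{x,w} ∈ qℤ[q] for x ≠ w. -/
structure IsKLBasis (cs : CoxeterSystem M W) (Tb : Module.Basis W R H) (C : W → H) : Prop where
  repr_self : ∀ w : W, Tb.repr (C w) w = 1
  repr_eq_zero : ∀ x w : W, ¬ bruhatLE cs x w → Tb.repr (C w) x = 0
  repr_mem : ∀ x w : W, x ≠ w → ∃ f : Polynomial ℤ,
    Tb.repr (C w) x = q * f.toLaurent

/-- The KL polynomial h_{y,x}. -/
def klPoly (Tb : Module.Basis W R H) (C : W → H) (y x : W) : R := Tb.repr (C x) y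

/-- μ(y,x): the coefficient of q in h_{y,x}. -/
def klMu (Tb : Module.Basis W R H) (C : W → H) (y x : W) : ℤ :=
  (klPoly Tb C y x).coeff 1

lemma length_le_of_bruhatLE (cs : CoxeterSystem M W) {a b : W} (h : bruhatLE cs a b) :
    cs.length a ≤ cs.length b := by
  obtain ⟨l, hred, hπ, l', hsub, hπ'⟩ := h
  calc cs.length a = cs.length (cs.wordProd l') := by rw [hπ']
    _ ≤ l'.length := cs.length_wordProd_le l'
    _ ≤ l.length := hsub.length_le
    _ = cs.length b := by rw [← hred, hπ]

lemma eq_of_bruhatLE_of_length_ge (cs : CoxeterSystem M W) {a b : W} (h : bruhatLE cs a b)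
    (hl : cs.length b ≤ cs.length a) : a = b := by
  obtain ⟨l, hred, hπ, l', hsub, hπ'⟩ := h
  have h1 : cs.length a ≤ l'.length := hπ' ▸ cs.length_wordProd_le l'
  have h2 : l.length = cs.length b := by rw [← hred, hπ]
  have h3 : l' = l := hsub.eq_of_length (le_antisymm hsub.length_le (by omega))
  rw [← hπ', ← hπ, h3]

lemma length_lt_of_bruhatLT (cs : CoxeterSystem M W) {a b : W} (h : bruhatLT cs a b) :
    cs.length a < cs.length b := by
  obtain ⟨hle, hne⟩ := h
  rcases Nat.lt_or_ge (cs.length a) (cs.length b) with h' | h'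
  · exact h'
  · exact absurd (eq_of_bruhatLE_of_length_ge cs hle h') hne

lemma resMap_basis (cs : CoxeterSystem M W) (Tb : Module.Basis W R H) (J : Set B) (x : W) :
    resMap cs Tb J (Tb x) = if x ∈ WJ cs J then Tb x else 0 :=
  Module.Basis.constr_basis Tb R _ x

lemma mul_simple_mem_iff (cs : CoxeterSystem M W) (J : Set B) {i : B} (hi : i ∈ J) (x : W) :
    x * cs.simple i ∈ WJ cs J ↔ x ∈ WJ cs J := by
  have hsmem : cs.simple i ∈ WJ cs J := Subgroup.subset_closure ⟨i, hi, rfl⟩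
  constructor
  · intro h
    have := mul_mem h hsmem
    rwa [mul_assoc, cs.simple_mul_simple_self, mul_one] at this
  · intro h
    exact mul_mem h hsmem

lemma resMap_mul_Tsimple (cs : CoxeterSystem M W) (Tb : Module.Basis W R H)
    (hT : IsHeckeBasis cs Tb) (J : Set B) {i : B} (hi : i ∈ J) (y : H) :
    resMap cs Tb J (y * Tb (cs.simple i)) = resMap cs Tb J y * Tb (cs.simple i) := by
  have key : (resMap cs Tb J).comp (LinearMap.mulRight R (Tb (cs.simple i)))
      = (LinearMap.mulRight R (Tb (cs.simple i))).comp (resMap cs Tb J) := by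
    apply Module.Basis.ext Tb
    intro x
    simp only [LinearMap.comp_apply, LinearMap.mulRight_apply]
    have hiff := mul_simple_mem_iff cs J hi x
    rcases cs.length_mul_simple x i with h | h
    · have hmul : Tb x * Tb (cs.simple i) = Tb (x * cs.simple i) :=
        hT.T_mul x (cs.simple i) (by rw [h, cs.length_simple])
      rw [hmul, resMap_basis, resMap_basis]
      by_cases hx : x ∈ WJ cs J
      · rw [if_pos (hiff.2 hx), if_pos hx, hmul]
      · rw [if_neg (fun hh => hx (hiff.1 hh)), if_neg hx, zero_mul]
    · have hlt : cs.length (x * cs.simple i) < cs.length x := by omega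
      have hmul := hT.mul_simple x i hlt
      rw [hmul, map_add, map_smul, resMap_basis, resMap_basis]
      by_cases hx : x ∈ WJ cs J
      · rw [if_pos (hiff.2 hx), if_pos hx]; exact hmul.symm
      · rw [if_neg (fun hh => hx (hiff.1 hh)), if_neg hx]; simp
  exact LinearMap.congr_fun key y

lemma resMap_mul_Cs (cs : CoxeterSystem M W) (Tb : Module.Basis W R H)
    (hT : IsHeckeBasis cs Tb) (C : W → H)
    (hCs : ∀ i : B, C (cs.simple i) = Tb (cs.simple i) + algebraMap R H q)
    (J : Set B) {i : B} (hi : i ∈ J) (y : H) :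
    resMap cs Tb J (y * C (cs.simple i)) = resMap cs Tb J y * C (cs.simple i) := by
  have hcomm : ∀ z : H, z * algebraMap R H q = q • z := fun z => by
    rw [← Algebra.commutes, ← Algebra.smul_def]
  rw [hCs i, mul_add, mul_add, hcomm, hcomm, map_add, map_smul,
    resMap_mul_Tsimple cs Tb hT J hi]

lemma lfun_finsum_mem_zero {ι : Type*} (φ : H →ₗ[R] R) (S : Set ι) (f : ι → H)
    (h : ∀ z ∈ S, φ (f z) = 0) : φ (∑ᶠ z ∈ S, f z) = 0 := by
  rw [finsum_mem_def]
  by_cases hfin : (Function.support (Set.indicator S f)).Finite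
  · rw [finsum_eq_sum _ hfin, map_sum]
    apply Finset.sum_eq_zero
    intro x hx
    have hxS : x ∈ S := by
      by_contra hxS
      have : Set.indicator S f x = 0 := Set.indicator_of_notMem hxS f
      exact (hfin.mem_toFinset.1 hx) this
    rw [Set.indicator_of_mem hxS f]
    exact h x hxS
  · rw [finsum_of_infinite_support hfin]
    exact map_zero φ

/-- if s ∈ J with vs > v and ws < w, then the restriction
coefficient h^J_{uv,w}(q) vanishes, i.e. C_v does not occur in
(T_{u⁻¹} C_w)|_J. -/
theorem resCoeff_vanish_of_descent (cs : CoxeterSystem M W) (Tb : Module.Basis W R H)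
    (hT : IsHeckeBasis cs Tb) (C : W → H) (hC : IsKLBasis cs Tb C)
    (hCs : ∀ i : B, C (cs.simple i) = Tb (cs.simple i) + algebraMap R H q)
    (hmul_lt : ∀ (x : W) (i : B), cs.length (x * cs.simple i) < cs.length x →
      C x * C (cs.simple i) = (q + qinv) • C x)
    (hmul_gt : ∀ (x : W) (i : B), cs.length (x * cs.simple i) = cs.length x + 1 →
      C x * C (cs.simple i) = C (x * cs.simple i) +
        ∑ᶠ z ∈ {z | bruhatLT cs z x ∧ cs.length (z * cs.simple i) < cs.length z},
          (klMu Tb C z x : R) • C z)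
    (J : Set B) (u w : W) (hu : IsMinRep cs J u)
    (hc : W →₀ R) (hsupp : ∀ v ∈ hc.support, v ∈ WJ cs J)
    (hexp : resMap cs Tb J (Tb u⁻¹ * C w) = hc.sum fun v a => a • C v)
    (v : W) (hv : v ∈ WJ cs J) (i : B) (hi : i ∈ J)
    (hvs : cs.length (v * cs.simple i) = cs.length v + 1)
    (hws : cs.length (w * cs.simple i) < cs.length w) :
    hc v = 0 := by
  classical
  -- Step 1: the restricted element is still annihilated (up to scalar) by C_s
  have hE : (hc.sum fun v a => a • C v) * C (cs.simple i)
      = (q + qinv) • hc.sum fun v a => a • C v := by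
    rw [← hexp, ← resMap_mul_Cs cs Tb hT C hCs J hi, mul_assoc, hmul_lt w i hws,
      mul_smul_comm, map_smul]
  -- Step 2: rewrite as Finset sums and cancel the descent part
  set p : W → Prop := fun x => cs.length (x * cs.simple i) = cs.length x + 1 with hp
  have hE' : ∑ x ∈ hc.support, hc x • (C x * C (cs.simple i))
      = ∑ x ∈ hc.support, (q + qinv) • hc x • C x := by
    have h1 : (∑ x ∈ hc.support, hc x • C x) * C (cs.simple i)
        = ∑ x ∈ hc.support, hc x • (C x * C (cs.simple i)) := by
      rw [Finset.sum_mul]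
      exact Finset.sum_congr rfl fun x _ => smul_mul_assoc _ _ _
    have h2 : (q + qinv) • (∑ x ∈ hc.support, hc x • C x)
        = ∑ x ∈ hc.support, (q + qinv) • hc x • C x := Finset.smul_sum
    rw [← h1, ← h2]
    simpa [Finsupp.sum] using hE
  rw [← Finset.sum_filter_add_sum_filter_not hc.support p
        (fun x => hc x • (C x * C (cs.simple i))),
      ← Finset.sum_filter_add_sum_filter_not hc.support p
        (fun x => (q + qinv) • hc x • C x)] at hE'
  have hcancel : ∑ x ∈ hc.support.filter (fun x => ¬ p x),
      hc x • (C x * C (cs.simple i))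
      = ∑ x ∈ hc.support.filter (fun x => ¬ p x), (q + qinv) • hc x • C x := by
    apply Finset.sum_congr rfl
    intro x hx
    have hnp : ¬ p x := (Finset.mem_filter.1 hx).2
    have hlt : cs.length (x * cs.simple i) < cs.length x := by
      rcases cs.length_mul_simple x i with h | h
      · exact absurd h hnp
      · omega
    rw [hmul_lt x i hlt, smul_comm]
  rw [hcancel] at hE'
  have key : ∑ x ∈ hc.support.filter p, hc x • (C x * C (cs.simple i))
      = ∑ x ∈ hc.support.filter p, (q + qinv) • hc x • C x :=
    add_right_cancel hE'
  -- Step 3: take a maximal-length element of the ascent part of the support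
  by_contra h0
  have hvsupp : v ∈ hc.support := Finsupp.mem_support_iff.2 h0
  have hvA : v ∈ hc.support.filter p := Finset.mem_filter.2 ⟨hvsupp, hvs⟩
  obtain ⟨v₀, hv₀A, hmax⟩ := Finset.exists_max_image (hc.support.filter p)
    (fun x => cs.length x) ⟨v, hvA⟩
  have hv₀p : cs.length (v₀ * cs.simple i) = cs.length v₀ + 1 :=
    (Finset.mem_filter.1 hv₀A).2
  -- Step 4: apply the coefficient functional at v₀ * s
  set t : W := v₀ * cs.simple i with ht
  set φ : H →ₗ[R] R := (Finsupp.lapply t).comp (Tb.repr : H ≃ₗ[R] (W →₀ R)).toLinearMap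
    with hφdef
  have hφ : ∀ y : H, φ y = Tb.repr y t := fun y => rfl
  have happ := congrArg φ key
  rw [map_sum, map_sum] at happ
  have hRHS : ∀ x ∈ hc.support.filter p, φ ((q + qinv) • hc x • C x) = 0 := by
    intro x hx
    have hxle : cs.length x ≤ cs.length v₀ := hmax x hx
    have hz : Tb.repr (C x) t = 0 := by
      apply hC.repr_eq_zero t x
      intro hle
      have := length_le_of_bruhatLE cs hle
      omega
    rw [map_smul, map_smul, smul_eq_mul, smul_eq_mul, hφ, hz, mul_zero, mul_zero]
  have hLHS : ∀ x ∈ hc.support.filter p,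
      φ (hc x • (C x * C (cs.simple i))) = hc x * (if x = v₀ then 1 else 0) := by
    intro x hx
    obtain ⟨hxs, hpx⟩ := Finset.mem_filter.1 hx
    have hxle : cs.length x ≤ cs.length v₀ := hmax x hx
    rw [hmul_gt x i hpx, smul_add, map_add]
    have hfin : φ (hc x • ∑ᶠ z ∈ {z | bruhatLT cs z x ∧
        cs.length (z * cs.simple i) < cs.length z}, (klMu Tb C z x : R) • C z) = 0 := by
      rw [map_smul, smul_eq_mul]
      have hz : φ (∑ᶠ z ∈ {z | bruhatLT cs z x ∧
          cs.length (z * cs.simple i) < cs.length z}, (klMu Tb C z x : R) • C z) = 0 := by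
        apply lfun_finsum_mem_zero
        intro z hz
        have hzlt : cs.length z < cs.length x := length_lt_of_bruhatLT cs hz.1
        have hz0 : Tb.repr (C z) t = 0 := by
          apply hC.repr_eq_zero t z
          intro hle
          have := length_le_of_bruhatLE cs hle
          omega
        rw [map_smul, smul_eq_mul, hφ, hz0, mul_zero]
      rw [hz, mul_zero]
    rw [hfin, add_zero, map_smul, smul_eq_mul, hφ]
    by_cases hxv : x = v₀
    · subst hxv
      rw [if_pos rfl, ← ht, hC.repr_self t]
    · rw [if_neg hxv]
      congr 1
      apply hC.repr_eq_zero t (x * cs.simple i)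
      intro hle
      have h1 := length_le_of_bruhatLE cs hle
      have h3 : t = x * cs.simple i := by
        apply eq_of_bruhatLE_of_length_ge cs hle
        omega
      exact hxv (mul_right_cancel h3.symm)
  rw [Finset.sum_congr rfl hLHS, Finset.sum_congr rfl hRHS, Finset.sum_const,
    smul_zero] at happ
  have hv₀0 : hc v₀ = 0 := by
    have : ∑ x ∈ hc.support.filter p, hc x * (if x = v₀ then 1 else 0) = hc v₀ := by
      simp only [mul_ite, mul_one, mul_zero]
      rw [Finset.sum_ite_eq' (hc.support.filter p) v₀ (fun x => hc x), if_pos hv₀A]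
    rw [this] at happ
    exact happ
  exact Finsupp.mem_support_iff.1 (Finset.mem_filter.1 hv₀A).1 hv₀0

end HeckeRes
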